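/- Let v_1, ..., v_n > 0 and let M be a real number with 0 < M < n. Consider minimizing F(x) = ∑_{r=1}^n 1/(x_r v_r) over vectors x with 0 < x_r ≤ 1 for all r and ∑_r x_r = M. If γ > 0 satisfies ∑_r min{1, 1/√(v_r γ)} = M, then the vector x*_r = min{1, 1/√(γ v_r)} is a global minimizer of F over the feasible set. -/

import Mathlib

/-!
Lagrangian relaxation: with multiplier `γ` for the budget constraint, each coordinate of `x*`
minimizes `b ↦ 1/(b v) + γ b` on `(0, 1]` (the unconstrained minimizer `1/√(vγ)`, clipped at `1`).
Summing these pointwise inequalities, the multiplier terms cancel because `x*` and `x` both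
spend the budget `M`.
-/

open Finset

theorem Finset.sum_le_sum_of_add_mul_le {ι : Type*} (s : Finset ι) (φ : ι → ℝ → ℝ)
    (γ : ℝ) (x y : ι → ℝ) (hle : ∀ r ∈ s, φ r (x r) + γ * x r ≤ φ r (y r) + γ * y r)
    (hsum : ∑ r ∈ s, x r = ∑ r ∈ s, y r) :
    ∑ r ∈ s, φ r (x r) ≤ ∑ r ∈ s, φ r (y r) := by
  have h := sum_le_sum hle
  rw [sum_add_distrib, sum_add_distrib, ← mul_sum, ← mul_sum, hsum] at h
  linarith

theorem two_mul_le_inv_add_sq_mul (t : ℝ) {b : ℝ} (hb : 0 < b) : 2 * t ≤ b⁻¹ + t ^ 2 * b := by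
  have key : 2 * t * b ≤ 1 + t ^ 2 * b ^ 2 := by nlinarith [sq_nonneg (t * b - 1)]
  rw [← le_div_iff₀ hb] at key
  calc 2 * t ≤ (1 + t ^ 2 * b ^ 2) / b := key
    _ = b⁻¹ + t ^ 2 * b := by field_simp

theorem inv_mul_add_mul_le_of_clipped_sqrt {v γ b : ℝ} (hv : 0 < v) (hγ : 0 < γ)
    (hb : 0 < b) (hb1 : b ≤ 1) :
    1 / (min 1 (1 / √(v * γ)) * v) + γ * min 1 (1 / √(v * γ)) ≤ 1 / (b * v) + γ * b := by
  set s := √(v * γ)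
  have hs : 0 < s := Real.sqrt_pos.2 (mul_pos hv hγ)
  have hγs : γ = s ^ 2 / v := by
    rw [Real.sq_sqrt (mul_pos hv hγ).le]
    field_simp
  have hrhs : 1 / (b * v) + γ * b = (b⁻¹ + s ^ 2 * b) / v := by
    rw [hγs]
    field_simp
  rcases le_or_gt s 1 with hs1 | hs1
  · rw [min_eq_left (one_le_one_div hs hs1), hrhs, hγs, le_div_iff₀ hv]
    have hs2 : s ^ 2 ≤ b⁻¹ := by nlinarith [one_le_inv_iff₀.2 ⟨hb, hb1⟩]
    calc (1 / (1 * v) + s ^ 2 / v * 1) * v = 1 + s ^ 2 := by field_simp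
      _ ≤ b⁻¹ + s ^ 2 * b := by
        -- the difference is `(1 - b) * (b⁻¹ - s ^ 2)`
        nlinarith [mul_inv_cancel₀ hb.ne', mul_nonneg (sub_nonneg.2 hb1) (sub_nonneg.2 hs2)]
  · rw [min_eq_right ((div_le_one hs).2 hs1.le), hrhs, hγs, le_div_iff₀ hv]
    calc (1 / (1 / s * v) + s ^ 2 / v * (1 / s)) * v = 2 * s := by field_simp; ring
      _ ≤ b⁻¹ + s ^ 2 * b := two_mul_le_inv_add_sq_mul s hb

theorem stmt_5_general (n : ℕ) (v : Fin n → ℝ) (hv : ∀ r, 0 < v r)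
    (M : ℝ)
    (γ : ℝ) (hγ : 0 < γ)
    (heq : (∑ r, min 1 (1 / Real.sqrt (v r * γ))) = M) :
    ∀ x : Fin n → ℝ, (∀ r, 0 < x r) → (∀ r, x r ≤ 1) → (∑ r, x r) = M →
      (∑ r, 1 / (min 1 (1 / Real.sqrt (v r * γ)) * v r)) ≤ ∑ r, 1 / (x r * v r) := by
  intro x hx0 hx1 hxM
  exact univ.sum_le_sum_of_add_mul_le (fun r b => 1 / (b * v r)) γ _ x
    (fun r _ => inv_mul_add_mul_le_of_clipped_sqrt (hv r) hγ (hx0 r) (hx1 r)) (heq.trans hxM.symm)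

/-- Water-filling optimality: if `γ > 0` satisfies `∑ r, min{1, 1/√(v r γ)} = M`, then
`x* r = min{1, 1/√(γ v r)}` globally minimizes `∑ r, 1/(x r · v r)` over vectors with
`0 < x r ≤ 1` and `∑ r, x r = M`. -/
theorem stmt_5 (n : ℕ) (v : Fin n → ℝ) (hv : ∀ r, 0 < v r)
    (M : ℝ) (hM : 0 < M) (hMn : M < n)
    (γ : ℝ) (hγ : 0 < γ)
    (heq : (∑ r, min 1 (1 / Real.sqrt (v r * γ))) = M) :
    ∀ x : Fin n → ℝ, (∀ r, 0 < x r) → (∀ r, x r ≤ 1) → (∑ r, x r) = M →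
      (∑ r, 1 / (min 1 (1 / Real.sqrt (v r * γ)) * v r)) ≤ ∑ r, 1 / (x r * v r) :=
  stmt_5_general n v hv M γ hγ heq
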